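/- arXiv:2507.07945 — 4 statements merged into one kernel-verified Lean document; each statement's English description precedes it below -/
import Mathlib

section
/- Let r_φ = [[cos φ, sin φ], [−sin φ, cos φ]], J = [[0,1],[−1,0]], A = [[I, I],[I, r_{φ₁}]], M = [[I, r_θ],[I, r_{θ+φ₂}]], N = M·A⁻¹, and J_a = [[aJ, 0],[0, J]] (4×4 block matrices), where a = sin((φ₂+θ)/2)·sin((φ₂+θ−φ₁)/2) / ( sin(θ/2)·sin((φ₁−θ)/2) ). Assume 0 < θ < φ₁ ≤ π and φ₁ < φ₂+θ < 2π. Then NᵀJ_aN is block diagonal of the form [[bJ, 0],[0, cJ]] for some real numbers b, c. -/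
set_option maxHeartbeats 1600000

open Real Matrix

/-- The 2×2 rotation matrix `[[cos φ, sin φ], [-sin φ, cos φ]]`. -/
noncomputable def rotMat (φ : ℝ) : Matrix (Fin 2) (Fin 2) ℝ :=
  !![Real.cos φ, Real.sin φ; -Real.sin φ, Real.cos φ]

/-- The 2×2 standard symplectic matrix `J = [[0,1],[-1,0]]`. -/
def Jmat : Matrix (Fin 2) (Fin 2) ℝ := !![0, 1; -1, 0]

/-- With `A = [[I,I],[I,r_{φ₁}]]`, `M = [[I,r_θ],[I,r_{θ+φ₂}]]`, `N = M·A⁻¹`,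
`a = sin((φ₂+θ)/2)sin((φ₂+θ−φ₁)/2)/(sin(θ/2)sin((φ₁−θ)/2))`, and
`J_a = [[aJ,0],[0,J]]`, assuming `0 < θ < φ₁ ≤ π` and `φ₁ < φ₂+θ < 2π`,
the matrix `NᵀJ_aN` is block diagonal of the form `[[bJ,0],[0,cJ]]`. -/
theorem stmt2 (θ φ₁ φ₂ : ℝ) (h1 : 0 < θ) (h2 : θ < φ₁) (h3 : φ₁ ≤ π)
    (h4 : φ₁ < φ₂ + θ) (h5 : φ₂ + θ < 2 * π) :
    let a : ℝ := Real.sin ((φ₂ + θ) / 2) * Real.sin ((φ₂ + θ - φ₁) / 2) /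
      (Real.sin (θ / 2) * Real.sin ((φ₁ - θ) / 2))
    let A : Matrix (Fin 2 ⊕ Fin 2) (Fin 2 ⊕ Fin 2) ℝ :=
      Matrix.fromBlocks 1 1 1 (rotMat φ₁)
    let M : Matrix (Fin 2 ⊕ Fin 2) (Fin 2 ⊕ Fin 2) ℝ :=
      Matrix.fromBlocks 1 (rotMat θ) 1 (rotMat (θ + φ₂))
    let N : Matrix (Fin 2 ⊕ Fin 2) (Fin 2 ⊕ Fin 2) ℝ := M * A⁻¹
    let Ja : Matrix (Fin 2 ⊕ Fin 2) (Fin 2 ⊕ Fin 2) ℝ :=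
      Matrix.fromBlocks (a • Jmat) 0 0 Jmat
    ∃ b c : ℝ, Nᵀ * Ja * N = Matrix.fromBlocks (b • Jmat) 0 0 (c • Jmat) := by
  intro a A M N Ja
  have pi_pos := Real.pi_pos
  have hsα : 0 < Real.sin (θ / 2) :=
    Real.sin_pos_of_pos_of_lt_pi (by linarith) (by linarith)
  have hsβ : 0 < Real.sin (φ₁ / 2) :=
    Real.sin_pos_of_pos_of_lt_pi (by linarith) (by linarith)
  have hsβα : 0 < Real.sin ((φ₁ - θ) / 2) :=
    Real.sin_pos_of_pos_of_lt_pi (by linarith) (by linarith)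
  -- half-angle identities
  have half : ∀ x : ℝ, Real.cos x = 1 - 2 * Real.sin (x / 2) ^ 2 ∧
      Real.sin x = 2 * Real.sin (x / 2) * Real.cos (x / 2) := by
    intro x
    have h1 := Real.cos_two_mul' (x / 2)
    have h2 := Real.sin_two_mul (x / 2)
    have h3 := Real.sin_sq_add_cos_sq (x / 2)
    rw [show 2 * (x / 2) = x by ring] at h1 h2
    exact ⟨by linarith, by linarith⟩
  obtain ⟨hct, hst⟩ := half θ
  obtain ⟨hcf, hsf⟩ := half φ₁
  obtain ⟨hcg, hsg⟩ := half (θ + φ₂)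
  have hgb : Real.sin ((φ₂ + θ - φ₁) / 2) =
      Real.sin ((θ + φ₂) / 2) * Real.cos (φ₁ / 2) -
        Real.cos ((θ + φ₂) / 2) * Real.sin (φ₁ / 2) := by
    rw [show (φ₂ + θ - φ₁) / 2 = (θ + φ₂) / 2 - φ₁ / 2 by ring, Real.sin_sub]
  have hba : Real.sin ((φ₁ - θ) / 2) =
      Real.sin (φ₁ / 2) * Real.cos (θ / 2) -
        Real.cos (φ₁ / 2) * Real.sin (θ / 2) := by
    rw [show (φ₁ - θ) / 2 = φ₁ / 2 - θ / 2 by ring, Real.sin_sub]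
  have hgam : Real.sin ((φ₂ + θ) / 2) = Real.sin ((θ + φ₂) / 2) := by
    rw [show (φ₂ + θ) / 2 = (θ + φ₂) / 2 by ring]
  have hsα' : Real.sin (θ / 2) ≠ 0 := ne_of_gt hsα
  have hsβ' : Real.sin (φ₁ / 2) ≠ 0 := ne_of_gt hsβ
  have hsβα' : Real.sin ((φ₁ - θ) / 2) ≠ 0 := ne_of_gt hsβα
  have hden : Real.cos φ₁ - 1 ≠ 0 := by
    rw [hcf]; nlinarith [sq_nonneg (Real.sin (φ₁ / 2))]
  have ha : a = Real.sin ((φ₂ + θ) / 2) * Real.sin ((φ₂ + θ - φ₁) / 2) /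
      (Real.sin (θ / 2) * Real.sin ((φ₁ - θ) / 2)) := rfl
  set cv : ℝ := (a * (Real.cos θ - 1) + Real.cos (θ + φ₂) - 1) / (Real.cos φ₁ - 1)
    with hcv
  set bv : ℝ := a + 1 - cv with hbv
  have E1 : bv + cv = a + 1 := by rw [hbv]; ring
  have E2 : bv + cv * Real.cos φ₁ = a * Real.cos θ + Real.cos (θ + φ₂) := by
    rw [hbv, hcv]; field_simp; ring
  have E3 : cv * Real.sin φ₁ = a * Real.sin θ + Real.sin (θ + φ₂) := by
    rw [hcv, ha, hgam, hgb]
    rw [hct, hst, hcf, hsf, hcg, hsg, hba]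
    have hba' : Real.sin (φ₁ / 2) * Real.cos (θ / 2) -
        Real.cos (φ₁ / 2) * Real.sin (θ / 2) ≠ 0 := hba ▸ hsβα'
    field_simp
    ring
  have hM : M = Matrix.fromBlocks 1 (rotMat θ) 1 (rotMat (θ + φ₂)) := rfl
  have hA : A = Matrix.fromBlocks 1 1 1 (rotMat φ₁) := rfl
  have hJa : Ja = Matrix.fromBlocks (a • Jmat) 0 0 Jmat := rfl
  have hN : N = M * A⁻¹ := rfl
  clear_value a cv bv
  set D : Matrix (Fin 2 ⊕ Fin 2) (Fin 2 ⊕ Fin 2) ℝ :=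
    Matrix.fromBlocks (bv • Jmat) 0 0 (cv • Jmat) with hD
  have hP1 := Real.sin_sq_add_cos_sq θ
  have hP2 := Real.sin_sq_add_cos_sq (θ + φ₂)
  have hPf := Real.sin_sq_add_cos_sq φ₁
  have key : Mᵀ * Ja * M = Aᵀ * D * A := by
    rw [hM, hA, hJa, hD]
    ext i j
    rcases i with i | i <;> rcases j with j | j <;>
      fin_cases i <;> fin_cases j <;>
      simp [Matrix.mul_apply, Fintype.sum_sum_type, Fin.sum_univ_two,
        rotMat, Jmat, Matrix.one_apply] <;>
      first
        | ring1
        | linear_combination E1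
        | linear_combination -E1
        | linear_combination E2
        | linear_combination -E2
        | linear_combination E3
        | linear_combination -E3
        | linear_combination -E1 + a * hP1 + hP2 - cv * hPf
        | linear_combination E1 - a * hP1 - hP2 + cv * hPf
  -- explicit inverse of A
  have hd4 : (2 : ℝ) - 2 * Real.cos φ₁ ≠ 0 := by
    rw [hcf]; nlinarith [sq_nonneg (Real.sin (φ₁ / 2))]
  set R' : Matrix (Fin 2) (Fin 2) ℝ :=
    (2 - 2 * Real.cos φ₁)⁻¹ • !![Real.cos φ₁ - 1, -Real.sin φ₁;
      Real.sin φ₁, Real.cos φ₁ - 1] with hR'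
  set B : Matrix (Fin 2 ⊕ Fin 2) (Fin 2 ⊕ Fin 2) ℝ :=
    Matrix.fromBlocks (1 + R') (-R') (-R') R' with hB
  have hd5 : (1 : ℝ) - Real.cos φ₁ ≠ 0 := by
    rw [hcf]; nlinarith [sq_nonneg (Real.sin (φ₁ / 2))]
  have hAB : A * B = 1 := by
    rw [hA, hB, hR']
    ext i j
    rcases i with i | i <;> rcases j with j | j <;>
      fin_cases i <;> fin_cases j <;>
      simp [Matrix.mul_apply, Fintype.sum_sum_type, Fin.sum_univ_two,
        rotMat, Matrix.one_apply] <;>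
      (try field_simp) <;>
      first
        | ring1
        | linear_combination hPf
        | linear_combination -hPf
        | linear_combination (2 - 2 * Real.cos φ₁) * hPf
        | linear_combination (-(2 - 2 * Real.cos φ₁)) * hPf
        | linear_combination (-4 * (1 - Real.cos φ₁)^2) * hPf
        | linear_combination (4 * (1 - Real.cos φ₁)^2) * hPf
        | linear_combination (2 * (1 - Real.cos φ₁)^2) * hPf
        | linear_combination (-2 * (1 - Real.cos φ₁)^2) * hPf
  have hAinv : A⁻¹ = B := Matrix.inv_eq_right_inv hAB
  refine ⟨bv, cv, ?_⟩
  rw [hN, hAinv, ← hD]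
  calc (M * B)ᵀ * Ja * (M * B)
      = Bᵀ * (Mᵀ * Ja * M) * B := by
        rw [Matrix.transpose_mul]; noncomm_ring
    _ = Bᵀ * (Aᵀ * D * A) * B := by rw [key]
    _ = (A * B)ᵀ * D * (A * B) := by
        rw [Matrix.transpose_mul]; noncomm_ring
    _ = D := by rw [hAB]; simp
end

section
/- With the notation of the previous matrix identity (N = M·A⁻¹, J_a = diag(aJ, J)), the real numbers b and c satisfying NᵀJ_aN = diag(bJ, cJ) are both nonzero, provided 0 < θ < φ₁ ≤ π and φ₁ < φ₂ + θ < 2π. -/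
open Real Matrix

lemma key2 (x y z : ℝ) (hx : Real.sin x ≠ 0) (hyx : Real.sin (y - x) ≠ 0) (hy : Real.sin y ≠ 0) :
    (Real.sin z * Real.sin (z - y) * Real.sin x + Real.sin z ^ 2 * Real.sin (y - x)) /
      (Real.sin (y - x) * Real.sin y ^ 2) * Real.sin (2 * y)
    = Real.sin z * Real.sin (z - y) / (Real.sin x * Real.sin (y - x)) * Real.sin (2 * x)
      + Real.sin (2 * z) := by
  simp only [Real.sin_sub, Real.sin_two_mul] at hyx ⊢
  field_simp
  ring

lemma key3 (x y z : ℝ) (hx : Real.sin x ≠ 0) (hyx : Real.sin (y - x) ≠ 0) (hy : Real.sin y ≠ 0) :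
    (Real.sin z * Real.sin (z - y) * Real.sin (y - x) + Real.sin (z - y) ^ 2 * Real.sin x) /
      (Real.sin x * Real.sin y ^ 2)
    + (Real.sin z * Real.sin (z - y) * Real.sin x + Real.sin z ^ 2 * Real.sin (y - x)) /
      (Real.sin (y - x) * Real.sin y ^ 2) * Real.cos (2 * y)
    = Real.sin z * Real.sin (z - y) / (Real.sin x * Real.sin (y - x)) * Real.cos (2 * x)
      + Real.cos (2 * z) := by
  simp only [Real.sin_sub, Real.cos_two_mul'] at hyx ⊢
  field_simp
  ring

lemma keyHb (x y z : ℝ) (hx : Real.sin x ≠ 0) (hyx : Real.sin (y - x) ≠ 0) (hy : Real.sin y ≠ 0) :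
    (Real.sin z * Real.sin (z - y) * Real.sin (y - x) + Real.sin (z - y) ^ 2 * Real.sin x) /
      (Real.sin x * Real.sin y ^ 2) * Real.sin y ^ 2
    = Real.sin z * Real.sin (z - y) / (Real.sin x * Real.sin (y - x)) * Real.sin (y - x) ^ 2
      + Real.sin (z - y) ^ 2 := by
  field_simp

lemma keyHc (x y z : ℝ) (hx : Real.sin x ≠ 0) (hyx : Real.sin (y - x) ≠ 0) (hy : Real.sin y ≠ 0) :
    (Real.sin z * Real.sin (z - y) * Real.sin x + Real.sin z ^ 2 * Real.sin (y - x)) /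
      (Real.sin (y - x) * Real.sin y ^ 2) * Real.sin y ^ 2
    = Real.sin z * Real.sin (z - y) / (Real.sin x * Real.sin (y - x)) * Real.sin x ^ 2
      + Real.sin z ^ 2 := by
  field_simp

lemma key1 (x y z : ℝ) (hx : Real.sin x ≠ 0) (hyx : Real.sin (y - x) ≠ 0) (hy : Real.sin y ≠ 0) :
    (Real.sin z * Real.sin (z - y) * Real.sin (y - x) + Real.sin (z - y) ^ 2 * Real.sin x) /
      (Real.sin x * Real.sin y ^ 2)
    + (Real.sin z * Real.sin (z - y) * Real.sin x + Real.sin z ^ 2 * Real.sin (y - x)) /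
      (Real.sin (y - x) * Real.sin y ^ 2)
    = Real.sin z * Real.sin (z - y) / (Real.sin x * Real.sin (y - x)) + 1 := by
  have hsy2 : Real.sin y ^ 2 ≠ 0 := pow_ne_zero _ hy
  have ha : Real.sin z * Real.sin (z - y) / (Real.sin x * Real.sin (y - x))
      * (Real.sin x * Real.sin (y - x)) = Real.sin z * Real.sin (z - y) := by
    field_simp
  apply mul_right_cancel₀ hsy2
  rw [add_mul, keyHb x y z hx hyx hy, keyHc x y z hx hyx hy]
  set a := Real.sin z * Real.sin (z - y) / (Real.sin x * Real.sin (y - x)) with hadef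
  simp only [Real.sin_sub] at ha ⊢
  linear_combination (-2*Real.cos y)*ha + (a*Real.sin y^2)*(Real.sin_sq_add_cos_sq x)
    - (a*Real.sin x^2 + Real.sin z^2)*(Real.sin_sq_add_cos_sq y)
    + (Real.sin y^2)*(Real.sin_sq_add_cos_sq z)

lemma blockId (θ φ₁ φ₂ a b c : ℝ)
    (E1 : b + c = a + 1)
    (E2 : c * Real.sin φ₁ = a * Real.sin θ + Real.sin (θ + φ₂))
    (E3 : b + c * Real.cos φ₁ = a * Real.cos θ + Real.cos (θ + φ₂)) :
    (Matrix.fromBlocks 1 (rotMat θ) 1 (rotMat (θ + φ₂)))ᵀ *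
      (Matrix.fromBlocks (a • Jmat) 0 0 Jmat) *
      (Matrix.fromBlocks 1 (rotMat θ) 1 (rotMat (θ + φ₂)))
    = (Matrix.fromBlocks 1 1 1 (rotMat φ₁))ᵀ *
      (Matrix.fromBlocks (b • Jmat) 0 0 (c • Jmat)) *
      (Matrix.fromBlocks 1 1 1 (rotMat φ₁)) := by
  ext i j
  rcases i with i | i <;> rcases j with j | j <;> fin_cases i <;> fin_cases j <;>
    simp [rotMat, Jmat, Matrix.mul_apply, Fintype.sum_sum_type, Fin.sum_univ_two,
      Matrix.fromBlocks] <;>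
    first
      | ring1
      | linear_combination E1
      | linear_combination -E1
      | linear_combination E2
      | linear_combination -E2
      | linear_combination E3
      | linear_combination -E3
      | linear_combination a*Real.sin_sq_add_cos_sq θ + Real.sin_sq_add_cos_sq (θ+φ₂)
          - c*Real.sin_sq_add_cos_sq φ₁ - E1
      | linear_combination -(a*Real.sin_sq_add_cos_sq θ) - Real.sin_sq_add_cos_sq (θ+φ₂)
          + c*Real.sin_sq_add_cos_sq φ₁ + E1

/-- With `A = [[I,I],[I,r_{φ₁}]]`, `M = [[I,r_θ],[I,r_{θ+φ₂}]]`, `N = M·A⁻¹`,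
`a = sin((φ₂+θ)/2)sin((φ₂+θ−φ₁)/2)/(sin(θ/2)sin((φ₁−θ)/2))`, and
`J_a = [[aJ,0],[0,J]]`, assuming `0 < θ < φ₁ ≤ π` and `φ₁ < φ₂+θ < 2π`,
the real numbers `b`, `c` with `NᵀJ_aN = [[bJ,0],[0,cJ]]` are both nonzero. -/
theorem stmt3 (θ φ₁ φ₂ : ℝ) (h1 : 0 < θ) (h2 : θ < φ₁) (h3 : φ₁ ≤ π)
    (h4 : φ₁ < φ₂ + θ) (h5 : φ₂ + θ < 2 * π) :
    let a : ℝ := Real.sin ((φ₂ + θ) / 2) * Real.sin ((φ₂ + θ - φ₁) / 2) /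
      (Real.sin (θ / 2) * Real.sin ((φ₁ - θ) / 2))
    let A : Matrix (Fin 2 ⊕ Fin 2) (Fin 2 ⊕ Fin 2) ℝ :=
      Matrix.fromBlocks 1 1 1 (rotMat φ₁)
    let M : Matrix (Fin 2 ⊕ Fin 2) (Fin 2 ⊕ Fin 2) ℝ :=
      Matrix.fromBlocks 1 (rotMat θ) 1 (rotMat (θ + φ₂))
    let N : Matrix (Fin 2 ⊕ Fin 2) (Fin 2 ⊕ Fin 2) ℝ := M * A⁻¹
    let Ja : Matrix (Fin 2 ⊕ Fin 2) (Fin 2 ⊕ Fin 2) ℝ :=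
      Matrix.fromBlocks (a • Jmat) 0 0 Jmat
    ∃ b c : ℝ, b ≠ 0 ∧ c ≠ 0 ∧
      Nᵀ * Ja * N = Matrix.fromBlocks (b • Jmat) 0 0 (c • Jmat) := by
  intro a A M N Ja
  have hpi := Real.pi_pos
  -- positivity of the relevant sines
  have hsx : 0 < Real.sin (θ / 2) :=
    Real.sin_pos_of_pos_of_lt_pi (by linarith) (by linarith)
  have hsyx : 0 < Real.sin ((φ₁ - θ) / 2) :=
    Real.sin_pos_of_pos_of_lt_pi (by linarith) (by linarith)
  have hsy : 0 < Real.sin (φ₁ / 2) :=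
    Real.sin_pos_of_pos_of_lt_pi (by linarith) (by linarith)
  have hsz : 0 < Real.sin ((φ₂ + θ) / 2) :=
    Real.sin_pos_of_pos_of_lt_pi (by linarith) (by linarith)
  have hszy : 0 < Real.sin ((φ₂ + θ - φ₁) / 2) :=
    Real.sin_pos_of_pos_of_lt_pi (by linarith) (by linarith)
  -- the numbers b and c
  set b : ℝ := (Real.sin ((φ₂ + θ) / 2) * Real.sin ((φ₂ + θ - φ₁) / 2) * Real.sin ((φ₁ - θ) / 2)
      + Real.sin ((φ₂ + θ - φ₁) / 2) ^ 2 * Real.sin (θ / 2)) /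
      (Real.sin (θ / 2) * Real.sin (φ₁ / 2) ^ 2) with hbdef
  set c : ℝ := (Real.sin ((φ₂ + θ) / 2) * Real.sin ((φ₂ + θ - φ₁) / 2) * Real.sin (θ / 2)
      + Real.sin ((φ₂ + θ) / 2) ^ 2 * Real.sin ((φ₁ - θ) / 2)) /
      (Real.sin ((φ₁ - θ) / 2) * Real.sin (φ₁ / 2) ^ 2) with hcdef
  have hb : 0 < b := div_pos
    (add_pos (mul_pos (mul_pos hsz hszy) hsyx) (mul_pos (pow_pos hszy 2) hsx))
    (mul_pos hsx (pow_pos hsy 2))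
  have hc : 0 < c := div_pos
    (add_pos (mul_pos (mul_pos hsz hszy) hsx) (mul_pos (pow_pos hsz 2) hsyx))
    (mul_pos hsyx (pow_pos hsy 2))
  refine ⟨b, c, ne_of_gt hb, ne_of_gt hc, ?_⟩
  -- instantiate the scalar identities
  have hyx' : Real.sin (φ₁ / 2 - θ / 2) ≠ 0 := by
    rw [show φ₁ / 2 - θ / 2 = (φ₁ - θ) / 2 by ring]; exact ne_of_gt hsyx
  have E1 := key1 (θ / 2) (φ₁ / 2) ((φ₂ + θ) / 2) (ne_of_gt hsx) hyx' (ne_of_gt hsy)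
  have E2 := key2 (θ / 2) (φ₁ / 2) ((φ₂ + θ) / 2) (ne_of_gt hsx) hyx' (ne_of_gt hsy)
  have E3 := key3 (θ / 2) (φ₁ / 2) ((φ₂ + θ) / 2) (ne_of_gt hsx) hyx' (ne_of_gt hsy)
  rw [show φ₁ / 2 - θ / 2 = (φ₁ - θ) / 2 by ring,
    show (φ₂ + θ) / 2 - φ₁ / 2 = (φ₂ + θ - φ₁) / 2 by ring] at E1 E2 E3
  rw [show 2 * (φ₁ / 2) = φ₁ by ring, show 2 * (θ / 2) = θ by ring,
    show 2 * ((φ₂ + θ) / 2) = θ + φ₂ by ring] at E2 E3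
  have E1' : b + c = a + 1 := E1
  have E2' : c * Real.sin φ₁ = a * Real.sin θ + Real.sin (θ + φ₂) := E2
  have E3' : b + c * Real.cos φ₁ = a * Real.cos θ + Real.cos (θ + φ₂) := E3
  -- A is invertible
  have hcos : Real.cos φ₁ = 1 - 2 * Real.sin (φ₁ / 2) ^ 2 := by
    have h := Real.cos_two_mul' (φ₁ / 2)
    rw [show 2 * (φ₁ / 2) = φ₁ by ring] at h
    linear_combination h + Real.sin_sq_add_cos_sq (φ₁ / 2)
  have hAdet : IsUnit A.det := by
    have : A.det = (rotMat φ₁ - 1 * 1).det := Matrix.det_fromBlocks_one₁₁ _ _ _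
    rw [isUnit_iff_ne_zero, this]
    have : (rotMat φ₁ - 1 * 1).det = 2 - 2 * Real.cos φ₁ := by
      simp [rotMat, Matrix.det_fin_two, Matrix.one_apply]
      linear_combination Real.sin_sq_add_cos_sq φ₁
    rw [this, hcos]
    nlinarith [pow_pos hsy 2]
  -- the key matrix identity
  have hMain : Mᵀ * Ja * M =
      Aᵀ * (Matrix.fromBlocks (b • Jmat) 0 0 (c • Jmat)) * A :=
    blockId θ φ₁ φ₂ a b c E1' E2' E3'
  have hA1 : A * A⁻¹ = 1 := Matrix.mul_nonsing_inv _ hAdet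
  have hA2 : (Aᵀ)⁻¹ * Aᵀ = 1 := Matrix.nonsing_inv_mul _ (by rwa [Matrix.det_transpose])
  have hN : Nᵀ * Ja * N = (Aᵀ)⁻¹ * (Mᵀ * Ja * M) * A⁻¹ := by
    show (M * A⁻¹)ᵀ * Ja * (M * A⁻¹) = _
    rw [Matrix.transpose_mul, Matrix.transpose_nonsing_inv]
    noncomm_ring [Matrix.mul_assoc]
  rw [hN, hMain]
  calc (Aᵀ)⁻¹ * (Aᵀ * Matrix.fromBlocks (b • Jmat) 0 0 (c • Jmat) * A) * A⁻¹
      = ((Aᵀ)⁻¹ * Aᵀ) * Matrix.fromBlocks (b • Jmat) 0 0 (c • Jmat) * (A * A⁻¹) := by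
        simp only [Matrix.mul_assoc]
    _ = Matrix.fromBlocks (b • Jmat) 0 0 (c • Jmat) := by rw [hA1, hA2, Matrix.one_mul, Matrix.mul_one]
end

section
/- For each angle φ ∈ (0, 2π) and each pair of points (p, q) in the hyperbolic plane ℍ, there exists a unique pair (x, v) with x ∈ ℍ and v ∈ T_xℍ such that exp_x(v) = p and exp_x(e^{iφ}·v) = q, where e^{iφ}·v denotes rotation of v by angle φ in T_xℍ. (Here v = 0 is allowed, corresponding to p = q = x.) -/
open Real

noncomputable section

/-- The Minkowski bilinear form of signature (+,+,−) on `ℝ³`. -/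
def mB (u v : Fin 3 → ℝ) : ℝ := u 0 * v 0 + u 1 * v 1 - u 2 * v 2

/-- The hyperboloid model of the hyperbolic plane `ℍ`:
the upper sheet of `⟨x,x⟩ = −1` in Minkowski 3-space. -/
def hypH : Set (Fin 3 → ℝ) := {x | mB x x = -1 ∧ 0 < x 2}

/-- The hyperbolic norm of a tangent vector (the Minkowski form is positive
definite on tangent spaces of the hyperboloid). -/
def hnorm (v : Fin 3 → ℝ) : ℝ := Real.sqrt (mB v v)

/-- The Riemannian exponential map of the hyperboloid model:
`exp_x(v) = cosh‖v‖·x + (sinh‖v‖/‖v‖)·v` (equal to `x` when `v = 0`). -/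
def expH (x v : Fin 3 → ℝ) : Fin 3 → ℝ :=
  Real.cosh (hnorm v) • x + (Real.sinh (hnorm v) / hnorm v) • v

/-- The Lorentzian cross product, characterized by `⟨u ×ₗ v, w⟩ = det(u,v,w)`.
For `x ∈ ℍ` and `v ∈ T_xℍ`, `lcross x v` is the rotation of `v` by `π/2`
in `T_xℍ` (the complex structure `j`). -/
def lcross (u v : Fin 3 → ℝ) : Fin 3 → ℝ :=
  ![u 1 * v 2 - u 2 * v 1, u 2 * v 0 - u 0 * v 2, -(u 0 * v 1 - u 1 * v 0)]

/-- Rotation of a tangent vector `v ∈ T_xℍ` by the angle `φ`:  `e^{iφ}·v`. -/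
def rotH (φ : ℝ) (x v : Fin 3 → ℝ) : Fin 3 → ℝ :=
  Real.cos φ • v + Real.sin φ • lcross x v

end

noncomputable section Aux

lemma mB_comm (u v : Fin 3 → ℝ) : mB u v = mB v u := by unfold mB; ring
lemma mB_add_left (u v w : Fin 3 → ℝ) : mB (u + v) w = mB u w + mB v w := by
  simp [mB]; ring
lemma mB_add_right (u v w : Fin 3 → ℝ) : mB u (v + w) = mB u v + mB u w := by
  simp [mB]; ring
lemma mB_sub_left (u v w : Fin 3 → ℝ) : mB (u - v) w = mB u w - mB v w := by
  simp [mB]; ring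
lemma mB_sub_right (u v w : Fin 3 → ℝ) : mB u (v - w) = mB u v - mB u w := by
  simp [mB]; ring
lemma mB_smul_left (a : ℝ) (u w : Fin 3 → ℝ) : mB (a • u) w = a * mB u w := by
  simp [mB]; ring
lemma mB_smul_right (a : ℝ) (u w : Fin 3 → ℝ) : mB u (a • w) = a * mB u w := by
  simp [mB]; ring
lemma lcross_add_left (u v w : Fin 3 → ℝ) : lcross (u + v) w = lcross u w + lcross v w := by
  funext i; fin_cases i <;> simp [lcross] <;> ring
lemma lcross_smul_left (a : ℝ) (u w : Fin 3 → ℝ) : lcross (a • u) w = a • lcross u w := by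
  funext i; fin_cases i <;> simp [lcross] <;> ring
lemma lcross_sub_right (u v w : Fin 3 → ℝ) : lcross u (v - w) = lcross u v - lcross u w := by
  funext i; fin_cases i <;> simp [lcross] <;> ring
lemma lcross_smul_right (a : ℝ) (u w : Fin 3 → ℝ) : lcross u (a • w) = a • lcross u w := by
  funext i; fin_cases i <;> simp [lcross] <;> ring
lemma lcross_self (u : Fin 3 → ℝ) : lcross u u = 0 := by
  funext i; fin_cases i <;> simp [lcross] <;> ring
lemma lcross_zero_right (u : Fin 3 → ℝ) : lcross u 0 = 0 := by
  funext i; fin_cases i <;> simp [lcross]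
lemma lcross_anti (u v : Fin 3 → ℝ) : lcross u v = -lcross v u := by
  funext i; fin_cases i <;> simp [lcross] <;> ring
lemma mB_lcross_left (u v : Fin 3 → ℝ) : mB (lcross u v) u = 0 := by simp [mB, lcross]; ring
lemma mB_lcross_right (u v : Fin 3 → ℝ) : mB (lcross u v) v = 0 := by simp [mB, lcross]; ring
lemma mB_lcross_lcross (u v : Fin 3 → ℝ) :
    mB (lcross u v) (lcross u v) = mB u v ^ 2 - mB u u * mB v v := by
  simp [mB, lcross]; ring
lemma lcross_lcross (u v : Fin 3 → ℝ) : lcross (lcross u v) u = mB u v • u - mB u u • v := by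
  funext i; fin_cases i <;> simp [lcross, mB] <;> ring
lemma mB_lcross_alt (u v w : Fin 3 → ℝ) : mB (lcross u v) w = -mB (lcross w v) u := by
  simp [mB, lcross]; ring

lemma key_id (x d : Fin 3 → ℝ) (hx : mB x x = -1) (hxd : mB x d = 0) :
    x 2 ^ 2 * mB d d = (d 0 ^ 2 + d 1 ^ 2) + (x 0 * d 1 - x 1 * d 0) ^ 2 := by
  unfold mB at *
  linear_combination (-(d 0 ^ 2 + d 1 ^ 2)) * hx + (x 0 * d 0 + x 1 * d 1 + x 2 * d 2) * hxd

lemma posdef_nonneg (x d : Fin 3 → ℝ) (hx : mB x x = -1) (hx2 : 0 < x 2)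
    (hxd : mB x d = 0) : 0 ≤ mB d d := by
  have k := key_id x d hx hxd
  nlinarith [sq_nonneg (d 0), sq_nonneg (d 1), sq_nonneg (x 0 * d 1 - x 1 * d 0),
    mul_pos hx2 hx2]

lemma posdef_eq (x d : Fin 3 → ℝ) (hx : mB x x = -1) (hx2 : 0 < x 2)
    (hxd : mB x d = 0) (hdd : mB d d = 0) : d = 0 := by
  have k := key_id x d hx hxd
  rw [hdd, mul_zero] at k
  have h0 : d 0 = 0 := by nlinarith [sq_nonneg (d 0), sq_nonneg (d 1), sq_nonneg (x 0 * d 1 - x 1 * d 0)]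
  have h1 : d 1 = 0 := by nlinarith [sq_nonneg (d 0), sq_nonneg (d 1), sq_nonneg (x 0 * d 1 - x 1 * d 0)]
  have h2 : d 2 = 0 := by
    unfold mB at hxd
    rw [h0, h1] at hxd
    have h : x 2 * d 2 = 0 := by linarith
    rcases mul_eq_zero.mp h with h | h
    · linarith
    · exact h
  funext i; fin_cases i <;> simp [h0, h1, h2]

lemma sheet (x p : Fin 3 → ℝ) (hx : mB x x = -1) (hp : mB p p = -1) (hp2 : 0 < p 2)
    (hneg : mB x p < 0) : 0 < x 2 := by
  unfold mB at *
  rcases lt_trichotomy (x 2) 0 with h | h | h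
  · exfalso
    have ha : x 0 * p 0 + x 1 * p 1 < x 2 * p 2 := by linarith
    have hb : x 2 * p 2 < 0 := mul_neg_of_neg_of_pos h hp2
    nlinarith [sq_nonneg (x 0 * p 1 - x 1 * p 0), sq_nonneg (x 2 + p 2), sq_nonneg (x 2), sq_nonneg (p 2)]
  · exfalso; nlinarith [sq_nonneg (x 0), sq_nonneg (x 1)]
  · exact h

lemma mB_le_neg_one (p q : Fin 3 → ℝ) (hp : mB p p = -1) (hp2 : 0 < p 2)
    (hq : mB q q = -1) (hq2 : 0 < q 2) : mB p q ≤ -1 := by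
  unfold mB at *
  nlinarith [sq_nonneg (p 0 - q 0), sq_nonneg (p 1 - q 1), sq_nonneg (p 0 * q 1 - p 1 * q 0),
    mul_pos hp2 hq2, sq_nonneg (p 2 - q 2), sq_nonneg (p 2 + q 2)]

/-- Uniqueness of solutions of the linear equation E. -/
lemma E_uniq (p q x y : Fin 3 → ℝ) (cs sn c : ℝ) (hp1 : mB p p = -1) (hp2 : 0 < p 2)
    (hk : 0 < c * (1 - cs))
    (hEx : cs • p + (c * (1 - cs)) • x + sn • lcross x p = q)
    (hEy : cs • p + (c * (1 - cs)) • y + sn • lcross y p = q) : x = y := by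
  have hxp : mB x p = mB y p := by
    have h1 : mB (cs • p + (c * (1 - cs)) • x + sn • lcross x p) p = mB q p := by rw [hEx]
    have h2 : mB (cs • p + (c * (1 - cs)) • y + sn • lcross y p) p = mB q p := by rw [hEy]
    simp only [mB_add_left, mB_smul_left, mB_lcross_left, mB_lcross_right, mul_zero,
      add_zero] at h1 h2
    exact mul_left_cancel₀ hk.ne' (by linarith [h1.trans h2.symm])
  have hdd : mB (x - y) (x - y) = 0 := by
    have h1 : mB (cs • p + (c * (1 - cs)) • x + sn • lcross x p) (x - y)
        = mB q (x - y) := by rw [hEx]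
    have h2 : mB (cs • p + (c * (1 - cs)) • y + sn • lcross y p) (x - y)
        = mB q (x - y) := by rw [hEy]
    have h3 := h1.trans h2.symm
    simp only [mB_add_left, mB_smul_left, mB_sub_right] at h3
    have ha : mB (lcross x p) x = 0 := mB_lcross_left x p
    have hb : mB (lcross y p) y = 0 := mB_lcross_left y p
    have hcdet : mB (lcross x p) y = -mB (lcross y p) x := mB_lcross_alt x p y
    have h4 : c * (1 - cs) * (mB x x - mB x y - (mB y x - mB y y)) = 0 := by
      linear_combination h3 + (-sn) * ha + (-sn) * hb + sn * hcdet
    have h5 : mB (x - y) (x - y) = mB x x - mB x y - (mB y x - mB y y) := by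
      rw [mB_sub_left, mB_sub_right, mB_sub_right]
    rw [h5]
    exact (mul_eq_zero.mp h4).resolve_left hk.ne'
  have hpd : mB p (x - y) = 0 := by
    rw [mB_sub_right, mB_comm p x, mB_comm p y, hxp]; ring
  have := posdef_eq p (x - y) hp1 hp2 hpd hdd
  exact sub_eq_zero.mp this


lemma rot_norm (φ : ℝ) (x v : Fin 3 → ℝ) (hx1 : mB x x = -1) (htv : mB x v = 0) :
    hnorm (rotH φ x v) = hnorm v := by
  have e1 : mB (lcross x v) v = 0 := mB_lcross_right x v
  have e2 : mB v (lcross x v) = 0 := by rw [mB_comm]; exact e1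
  have e3 : mB (lcross x v) (lcross x v) = mB v v := by
    rw [mB_lcross_lcross, htv, hx1]; ring
  have hmrot : mB (rotH φ x v) (rotH φ x v) = mB v v := by
    unfold rotH
    simp only [mB_add_left, mB_add_right, mB_smul_left, mB_smul_right, e1, e2, e3]
    linear_combination (mB v v) * (Real.sin_sq_add_cos_sq φ)
  unfold hnorm; rw [hmrot]

lemma sol_mB (φ : ℝ) (x v p q : Fin 3 → ℝ) (hx1 : mB x x = -1) (htv : mB x v = 0)
    (hvnn : 0 ≤ mB v v) (h1 : expH x v = p) (h2 : expH x (rotH φ x v) = q) :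
    mB p q = -(Real.cosh (hnorm v)) ^ 2 + Real.cos φ * (Real.sinh (hnorm v)) ^ 2 := by
  have hρ2 : hnorm v ^ 2 = mB v v := Real.sq_sqrt hvnn
  have hkey : (Real.sinh (hnorm v) / hnorm v) ^ 2 * mB v v = Real.sinh (hnorm v) ^ 2 := by
    rcases eq_or_ne (hnorm v) 0 with h | h
    · rw [← hρ2, h]; simp
    · rw [← hρ2]; field_simp
  have hrotn := rot_norm φ x v hx1 htv
  have e1 : mB x (lcross x v) = 0 := by rw [mB_comm]; exact mB_lcross_left x v
  have e2 : mB v (lcross x v) = 0 := by rw [mB_comm]; exact mB_lcross_right x v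
  have e3 : mB v x = 0 := by rw [mB_comm]; exact htv
  rw [← h1, ← h2]
  unfold expH
  rw [hrotn]
  unfold rotH
  simp only [mB_add_left, mB_add_right, mB_smul_left, mB_smul_right, e1, e2, e3, htv, hx1]
  linear_combination (Real.cos φ) * hkey

end Aux



/-- For each `φ ∈ (0, 2π)` and each pair `(p,q)` of points of the hyperbolic
plane, there is a unique `(x,v)` with `x ∈ ℍ`, `v ∈ T_xℍ`, `exp_x(v) = p`
and `exp_x(e^{iφ}·v) = q`. -/
theorem stmt5 (φ : ℝ) (hφ : φ ∈ Set.Ioo 0 (2 * π)) (p q : Fin 3 → ℝ)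
    (hp : p ∈ hypH) (hq : q ∈ hypH) :
    ∃! xv : (Fin 3 → ℝ) × (Fin 3 → ℝ),
      xv.1 ∈ hypH ∧ mB xv.1 xv.2 = 0 ∧
        expH xv.1 xv.2 = p ∧ expH xv.1 (rotH φ xv.1 xv.2) = q := by
  obtain ⟨hφ1, hφ2⟩ := hφ
  obtain ⟨hp1, hp2⟩ := hp
  obtain ⟨hq1, hq2⟩ := hq
  have hpi := Real.pi_pos
  have hcs : Real.cos φ < 1 := by
    rcases lt_or_eq_of_le (Real.cos_le_one φ) with h' | h'
    · exact h'
    · exfalso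
      obtain ⟨n, hn⟩ := (Real.cos_eq_one_iff φ).mp h'
      have hn0 : (0:ℝ) < (n:ℝ) := by nlinarith
      have hn1 : (n:ℝ) < 1 := by nlinarith
      have g0 : (0:ℤ) < n := by exact_mod_cast hn0
      have g1 : (n:ℤ) < 1 := by exact_mod_cast hn1
      omega
  set cs := Real.cos φ with hcs_def
  set sn := Real.sin φ with hsn_def
  have hsn2 : sn ^ 2 = (1 - cs) * (1 + cs) := by
    rw [hsn_def, hcs_def]; linear_combination Real.sin_sq_add_cos_sq φ
  have h1cs : (0:ℝ) < 1 - cs := by linarith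
  have hmle : mB p q ≤ -1 := mB_le_neg_one p q hp1 hp2 hq1 hq2
  rcases lt_or_eq_of_le hmle with hmlt | hmeq
  · -- main case : mB p q < -1
    obtain ⟨s2, hs2pos, hpq⟩ : ∃ s2 : ℝ, 0 < s2 ∧ mB p q = -1 - s2 * (1 - cs) :=
      ⟨(-1 - mB p q) / (1 - cs), div_pos (by linarith) h1cs, by field_simp; ring⟩
    have h1s2 : (0:ℝ) < 1 + s2 := by linarith
    obtain ⟨c, hcpos, hc2⟩ : ∃ c : ℝ, 0 < c ∧ c ^ 2 = 1 + s2 :=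
      ⟨Real.sqrt (1 + s2), Real.sqrt_pos.mpr h1s2, Real.sq_sqrt h1s2.le⟩
    obtain ⟨s, hspos, hs2'⟩ : ∃ s : ℝ, 0 < s ∧ s ^ 2 = s2 :=
      ⟨Real.sqrt s2, Real.sqrt_pos.mpr hs2pos, Real.sq_sqrt hs2pos.le⟩
    obtain ⟨r, hsr, hcr, hrpos⟩ : ∃ r : ℝ, Real.sinh r = s ∧ Real.cosh r = c ∧ 0 < r := by
      refine ⟨Real.arsinh s, Real.sinh_arsinh s, ?_, ?_⟩
      · rw [Real.cosh_arsinh, hs2', ← hc2, Real.sqrt_sq hcpos.le]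
      · have h := Real.sinh_pos_iff (x := Real.arsinh s)
        rw [Real.sinh_arsinh] at h
        exact h.mp hspos
    have hDpos : (0:ℝ) < 2 + s2 * (1 - cs) := by nlinarith
    set x₀ : Fin 3 → ℝ := (c / (2 + s2 * (1 - cs))) • (p + q) +
      (sn / ((1 - cs) * (2 + s2 * (1 - cs)))) • lcross p q with hx₀_def
    have e1 : mB p (lcross p q) = 0 := by rw [mB_comm]; exact mB_lcross_left p q
    have e2 : mB q (lcross p q) = 0 := by rw [mB_comm]; exact mB_lcross_right p q
    have e3 : mB (lcross p q) p = 0 := mB_lcross_left p q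
    have e4 : mB (lcross p q) q = 0 := mB_lcross_right p q
    have e5 : mB (lcross p q) (lcross p q) = (-1 - s2 * (1 - cs)) ^ 2 - 1 := by
      rw [mB_lcross_lcross, hpq, hp1, hq1]; ring
    have hqp' : mB q p = -1 - s2 * (1 - cs) := by rw [mB_comm]; exact hpq
    have hxx : mB x₀ x₀ = -1 := by
      rw [hx₀_def]
      simp only [mB_add_left, mB_add_right, mB_smul_left, mB_smul_right, e1, e2, e3, e4, e5,
        hp1, hq1, hpq, hqp']
      field_simp
      linear_combination (-2*(1-cs)^2*(2+s2*(1-cs))) * hc2 + (s2*(1-cs)*(2+s2*(1-cs))) * hsn2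
    have hxp : mB x₀ p = -c := by
      rw [hx₀_def]
      simp only [mB_add_left, mB_smul_left, e3, hp1, hqp']
      have hDne : (2 + s2 * (1 - cs)) ≠ 0 := hDpos.ne'
      field_simp
      ring
    have hx₀2 : 0 < x₀ 2 := sheet x₀ p hxx hp1 hp2 (by rw [hxp]; linarith)
    have hpx : mB p x₀ = -c := by rw [mB_comm]; exact hxp
    set w : Fin 3 → ℝ := p - c • x₀ with hw_def
    have hww : mB w w = s2 := by
      rw [hw_def]
      simp only [mB_sub_left, mB_sub_right, mB_smul_left, mB_smul_right, hp1, hxx, hxp, hpx]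
      linear_combination hc2
    have htw : mB x₀ w = 0 := by
      rw [hw_def]
      simp only [mB_sub_right, mB_smul_right, hxp, hxx]
      ring
    set v₀ : Fin 3 → ℝ := (r / s) • w with hv₀_def
    have htv₀ : mB x₀ v₀ = 0 := by rw [hv₀_def, mB_smul_right, htw, mul_zero]
    have hvv₀ : mB v₀ v₀ = r ^ 2 := by
      rw [hv₀_def, mB_smul_left, mB_smul_right, hww, ← hs2']
      field_simp
    have hnv₀ : hnorm v₀ = r := by
      unfold hnorm; rw [hvv₀]; exact Real.sqrt_sq hrpos.le
    have hsv : (s / r) • v₀ = w := by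
      rw [hv₀_def, smul_smul]
      have h : s / r * (r / s) = 1 := by field_simp
      rw [h, one_smul]
    have hE : cs • p + (c * (1 - cs)) • x₀ + sn • lcross x₀ p = q := by
      rw [hx₀_def]
      simp only [lcross_add_left, lcross_smul_left]
      rw [lcross_self, lcross_anti q p, lcross_lcross, hpq, hp1]
      match_scalars
      · field_simp
        linear_combination (1-cs)^2 * hc2 + (-1-(1-cs)*s2) * hsn2
      · field_simp
        linear_combination (1-cs)^2 * hc2 + hsn2
      · field_simp
        ring
    have he1 : expH x₀ v₀ = p := by
      unfold expH
      rw [hnv₀, hcr, hsr, hv₀_def, smul_smul]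
      have h : s / r * (r / s) = 1 := by field_simp
      rw [h, one_smul, hw_def]
      module
    have he2 : expH x₀ (rotH φ x₀ v₀) = q := by
      unfold expH
      rw [rot_norm φ x₀ v₀ hxx htv₀, hnv₀, hcr, hsr]
      have hjv : (s / r) • lcross x₀ v₀ = lcross x₀ p := by
        rw [← lcross_smul_right, hsv, hw_def, lcross_sub_right, lcross_smul_right,
          lcross_self, smul_zero, sub_zero]
      have h5 : (s / r) • rotH φ x₀ v₀ = cs • w + sn • lcross x₀ p := by
        unfold rotH
        rw [← hcs_def, ← hsn_def, smul_add, smul_comm (s/r) cs, smul_comm (s/r) sn, hsv, hjv]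
      rw [h5, ← hE, hw_def]
      module
    refine ⟨⟨x₀, v₀⟩, ⟨⟨hxx, hx₀2⟩, htv₀, he1, he2⟩, ?_⟩
    rintro ⟨x, v⟩ ⟨⟨hx1, hx2⟩, htv, h1, h2⟩
    dsimp only at hx1 hx2 htv h1 h2
    have hvnn : 0 ≤ mB v v := posdef_nonneg x v hx1 hx2 htv
    have hmv := sol_mB φ x v p q hx1 htv hvnn h1 h2
    rw [← hcs_def] at hmv
    have hρnn : 0 ≤ hnorm v := Real.sqrt_nonneg _
    have hSnn : 0 ≤ Real.sinh (hnorm v) := by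
      rcases eq_or_lt_of_le hρnn with h | h
      · rw [← h]; simp
      · exact (Real.sinh_pos_iff.mpr h).le
    have hfac : (Real.sinh (hnorm v) ^ 2 - s2) * (1 - cs) = 0 := by
      have hcsq := Real.cosh_sq (hnorm v)
      linear_combination hmv - hpq - hcsq
    have hS2' : Real.sinh (hnorm v) ^ 2 = s2 := by
      rcases mul_eq_zero.mp hfac with h | h
      · linarith
      · exact absurd h h1cs.ne'
    have hS : Real.sinh (hnorm v) = s := by
      rw [← Real.sqrt_sq hSnn, hS2', ← hs2', Real.sqrt_sq hspos.le]
    have hρr : hnorm v = r := by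
      rw [← Real.arsinh_sinh (hnorm v), hS, ← Real.arsinh_sinh r, hsr]
    have hC : Real.cosh (hnorm v) = c := by rw [hρr, hcr]
    have hrotn : hnorm (rotH φ x v) = hnorm v := rot_norm φ x v hx1 htv
    have hav : (Real.sinh (hnorm v) / hnorm v) • v = p - Real.cosh (hnorm v) • x := by
      rw [← h1]; unfold expH; module
    have hjv : (Real.sinh (hnorm v) / hnorm v) • lcross x v = lcross x p
        - Real.cosh (hnorm v) • lcross x x := by
      rw [← lcross_smul_right, hav, lcross_sub_right, lcross_smul_right]
    rw [lcross_self, smul_zero, sub_zero] at hjv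
    have hE' : cs • p + (c * (1 - cs)) • x + sn • lcross x p = q := by
      rw [← h2]; unfold expH; rw [hrotn]
      unfold rotH
      rw [← hcs_def, ← hsn_def, smul_add,
        smul_comm (Real.sinh (hnorm v) / hnorm v) cs,
        smul_comm (Real.sinh (hnorm v) / hnorm v) sn, hav, hjv, hC]
      module
    have hxeq : x = x₀ := E_uniq p q x x₀ cs sn c hp1 hp2 (mul_pos hcpos h1cs) hE' hE
    have hveq : v = v₀ := by
      rw [hS, hC, hxeq, hρr, ← hw_def] at hav
      rw [hv₀_def, ← hav, smul_smul]
      have h : r / s * (s / r) = 1 := by field_simp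
      rw [h, one_smul]
    rw [Prod.mk.injEq]
    exact ⟨hxeq, hveq⟩
  · -- degenerate case : mB p q = -1, so q = p
    have hqp : q = p := by
      have hd1 : mB p (p - q) = 0 := by rw [mB_sub_right, hp1, hmeq]; norm_num
      have hd2 : mB (p - q) (p - q) = 0 := by
        rw [mB_sub_left, mB_sub_right, mB_sub_right, mB_comm q p, hp1, hq1, hmeq]
        norm_num
      have h := posdef_eq p (p - q) hp1 hp2 hd1 hd2
      exact (sub_eq_zero.mp h).symm
    subst hqp
    have h0 : hnorm (0 : Fin 3 → ℝ) = 0 := by simp [hnorm, mB]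
    have hexp0 : ∀ y : Fin 3 → ℝ, expH y 0 = y := by
      intro y; unfold expH; rw [h0]; simp
    refine ⟨⟨q, 0⟩, ⟨⟨hp1, hp2⟩, ?_, ?_, ?_⟩, ?_⟩
    · simp [mB]
    · exact hexp0 q
    · have hr0 : rotH φ q 0 = 0 := by
        unfold rotH; rw [lcross_zero_right]; simp
      rw [hr0]; exact hexp0 q
    · rintro ⟨x, v⟩ ⟨⟨hx1, hx2⟩, htv, h1, h2⟩
      dsimp only at hx1 hx2 htv h1 h2
      have hvnn : 0 ≤ mB v v := posdef_nonneg x v hx1 hx2 htv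
      have hv : v = 0 := by
        by_contra hv0
        have hvv0 : mB v v ≠ 0 := fun h => hv0 (posdef_eq x v hx1 hx2 htv h)
        have hρpos : 0 < hnorm v := Real.sqrt_pos.mpr (lt_of_le_of_ne hvnn (Ne.symm hvv0))
        have hSpos : 0 < Real.sinh (hnorm v) := Real.sinh_pos_iff.mpr hρpos
        have hmv := sol_mB φ x v q q hx1 htv hvnn h1 h2
        rw [← hcs_def] at hmv
        have hcsq := Real.cosh_sq (hnorm v)
        nlinarith [mul_pos (mul_pos hSpos hSpos) h1cs]
      have hx : x = q := by
        rw [hv, hexp0 x] at h1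
        exact h1
      rw [Prod.mk.injEq]
      exact ⟨hx, hv⟩
end

section
/- Let x be a point of the hyperbolic plane, v ∈ T_xℍ with v ≠ 0, and p = exp_x(v). Write ṽ = v/||v||, and let w_p = (d/dt)|_{t=1} exp_x(t v) / ||v|| (the unit tangent to the geodesic from x to p at p). Then the derivative of the exponential map exp: Tℍ → ℍ at (x, v), applied to the horizontal lift of j·ṽ (where j is rotation by π/2), equals cosh(||v||)·j·w_p. -/
open Real

/-- Positive definiteness of the Minkowski form on tangent spaces. -/
lemma aux_mB_pos (x v : Fin 3 → ℝ) (hx : x ∈ hypH) (hv : mB x v = 0) (hv0 : v ≠ 0) :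
    0 < mB v v := by
  obtain ⟨hx1, hx2⟩ := hx
  simp only [mB, hypH, Set.mem_setOf_eq] at *
  have key : x 2 ^ 2 * (v 0 * v 0 + v 1 * v 1 - v 2 * v 2) =
      (v 0 ^ 2 + v 1 ^ 2) + (x 0 * v 1 - x 1 * v 0) ^ 2 := by
    linear_combination (-(v 0 ^ 2) - v 1 ^ 2) * hx1 +
      (x 0 * v 0 + x 1 * v 1 + x 2 * v 2) * hv
  have h01 : 0 < v 0 ^ 2 + v 1 ^ 2 := by
    rcases eq_or_ne (v 0) 0 with h0 | h0
    · rcases eq_or_ne (v 1) 0 with h1 | h1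
      · have hv2 : v 2 = 0 := by
          have := hv; rw [h0, h1] at this
          have h : x 2 * v 2 = 0 := by linarith
          rcases mul_eq_zero.mp h with h | h
          · exact absurd h (ne_of_gt hx2)
          · exact h
        exfalso; apply hv0; funext i; fin_cases i <;> simp [h0, h1, hv2]
      · positivity
    · positivity
  nlinarith [sq_nonneg (x 0 * v 1 - x 1 * v 0), mul_pos hx2 hx2]

/-- `lcross` is linear in its second argument (scalar part). -/
lemma aux_lcross_smul (x v : Fin 3 → ℝ) (c : ℝ) :
    lcross x (c • v) = c • lcross x v := by
  funext i
  fin_cases i <;> (simp [lcross]; ring)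

/-- The key algebraic identity: `j` applied at `p` to `w_p` is the
parallel-transported rotation `r⁻¹ • (x × v)`. -/
lemma aux_cross_eq (x v : Fin 3 → ℝ) (r : ℝ) (hrne : r ≠ 0)
    (hch : Real.cosh r ^ 2 - Real.sinh r ^ 2 = 1) :
    lcross (Real.cosh r • x + (Real.sinh r / r) • v)
      (Real.sinh r • x + (r⁻¹ * Real.cosh r) • v) = r⁻¹ • lcross x v := by
  funext i
  fin_cases i
  · simp only [lcross, Pi.smul_apply, Pi.add_apply, smul_eq_mul,
      Matrix.cons_val_zero, Fin.zero_eta]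
    field_simp
    linear_combination ((x 1 * v 2 - x 2 * v 1) * r) * hch
  · simp only [lcross, Pi.smul_apply, Pi.add_apply, smul_eq_mul,
      Matrix.cons_val_one, Matrix.head_cons, Fin.mk_one, Matrix.cons_val_zero]
    field_simp
    linear_combination ((x 2 * v 0 - x 0 * v 2) * r) * hch
  · simp only [lcross, Pi.smul_apply, Pi.add_apply, smul_eq_mul,
      Matrix.cons_val_two, Matrix.tail_cons, Matrix.head_cons, Fin.reduceFinMk]
    field_simp
    linear_combination (-(x 0 * v 1 - x 1 * v 0) * r) * hch

/-- Let `x ∈ ℍ`, `0 ≠ v ∈ T_xℍ`, `p = exp_x(v)`, `ṽ = v/‖v‖`, and let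
`w_p` be the unit tangent at `p` to the geodesic from `x` to `p`.  The
derivative of `exp : Tℍ → ℍ` at `(x,v)` applied to the horizontal lift of
`j·ṽ` is `cosh(‖v‖)·j·w_p`.  (The horizontal lift derivative is realized by
the variation `s ↦ exp(x(s), v(s))` where `x(s)` is the geodesic through `x`
with velocity `j·ṽ` and `v(s)` is the parallel transport of `v` along it;
in the hyperboloid model this parallel transport is the constant vector `v`.) -/
theorem stmt8 (x v : Fin 3 → ℝ) (hx : x ∈ hypH) (hv : mB x v = 0) (hv0 : v ≠ 0) :
    let vt : Fin 3 → ℝ := (hnorm v)⁻¹ • v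
    let p : Fin 3 → ℝ := expH x v
    let wp : Fin 3 → ℝ := (hnorm v)⁻¹ • deriv (fun t : ℝ => expH x (t • v)) 1
    deriv (fun s : ℝ =>
        expH (Real.cosh s • x + Real.sinh s • lcross x vt) v) 0 =
      Real.cosh (hnorm v) • lcross p wp := by
  intro vt p wp
  have hmvv : 0 < mB v v := aux_mB_pos x v hx hv hv0
  set r := hnorm v with hrdef
  have hr : 0 < r := Real.sqrt_pos.mpr hmvv
  have hrne : r ≠ 0 := ne_of_gt hr
  -- Step 1 : inner derivative (the Jacobi field along the geodesic)
  have hinner : HasDerivAt (fun t : ℝ => expH x (t • v))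
      ((r * Real.sinh r) • x + Real.cosh r • v) 1 := by
    have h1 : HasDerivAt (fun t : ℝ => Real.cosh (t * r) • x + (Real.sinh (t * r) / r) • v)
        ((r * Real.sinh r) • x + Real.cosh r • v) 1 := by
      have hc : HasDerivAt (fun t : ℝ => Real.cosh (t * r)) (r * Real.sinh r) 1 := by
        have := (Real.hasDerivAt_cosh (1 * r)).comp 1 ((hasDerivAt_id 1).mul_const r)
        simpa [mul_comm, Function.comp_def] using this
      have hs : HasDerivAt (fun t : ℝ => Real.sinh (t * r) / r) (Real.cosh r) 1 := by
        have h := ((Real.hasDerivAt_sinh (1 * r)).comp 1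
          ((hasDerivAt_id 1).mul_const r)).div_const r
        rw [one_mul, mul_div_assoc, div_self hrne, mul_one] at h
        simpa [Function.comp_def] using h
      exact (hc.smul_const x).add (hs.smul_const v)
    refine h1.congr_of_eventuallyEq ?_
    filter_upwards [eventually_gt_nhds (show (0:ℝ) < 1 by norm_num)] with t ht
    have hnt : hnorm (t • v) = t * r := by
      have hm : mB (t • v) (t • v) = t ^ 2 * mB v v := by
        simp only [mB, Pi.smul_apply, smul_eq_mul]; ring
      rw [hnorm, hm, hrdef, hnorm, Real.sqrt_mul (sq_nonneg t),
        Real.sqrt_sq ht.le]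
    rw [expH, hnt, smul_smul]
    congr 2
    field_simp
  -- Step 2 : the values of `w_p` and `p`
  have hwp : wp = Real.sinh r • x + (r⁻¹ * Real.cosh r) • v := by
    show (r⁻¹ : ℝ) • _ = _
    rw [hinner.deriv, smul_add, smul_smul, smul_smul]
    congr 2
    field_simp
  have hp : p = Real.cosh r • x + (Real.sinh r / r) • v := rfl
  -- Step 3 : outer derivative (the variation through geodesics)
  have houter : HasDerivAt (fun s : ℝ =>
      expH (Real.cosh s • x + Real.sinh s • lcross x vt) v)
      (Real.cosh r • lcross x vt) 0 := by
    have hX : HasDerivAt (fun s : ℝ => Real.cosh s • x + Real.sinh s • lcross x vt)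
        (lcross x vt) 0 := by
      have h1 := (Real.hasDerivAt_cosh 0).smul_const x
      have h2 := (Real.hasDerivAt_sinh 0).smul_const (lcross x vt)
      simpa [Pi.add_def] using h1.add h2
    have h := (hX.const_smul (Real.cosh r)).add_const ((Real.sinh r / r) • v)
    simpa [expH] using h
  rw [houter.deriv]
  -- Step 4 : conclude via the algebraic identity
  have hch : Real.cosh r ^ 2 - Real.sinh r ^ 2 = 1 := Real.cosh_sq_sub_sinh_sq r
  rw [hwp, hp, aux_cross_eq x v r hrne hch]
  show Real.cosh r • lcross x (r⁻¹ • v) = _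
  rw [aux_lcross_smul]
end
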